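/- arXiv:1809.04065 — 2 statements merged into one kernel-verified Lean document; each statement's English description precedes it below -/
import Mathlib

section
/- Let f = Σ_{i∈ℤ} a_i t^i be an element of the Robba ring over K (a complete discretely valued field of mixed characteristic (0,p)), and let λ ≥ 0 be a real number. Then the following are equivalent: (i) there exist r' > 0 and a constant C such that r^λ |f|_r ≤ C for all r ∈ (0, r'], where |f|_r = sup_i |a_i| e^{-ri}; (ii) |a_i| = O(i^λ) as i → +∞. -/
/-!
Testing `|f|_r ≥ |a_i| e^{-ri}` at `r = 1/i` gives `|a_i| ≤ e |f|_{1/i} ≤ e C i^λ`.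
Conversely, if `|a_i| ≤ C i^λ` for `i ≥ N`, the terms with `i ≥ N` satisfy
`r^λ |a_i| e^{-ri} ≤ C (ri)^λ e^{-ri} ≤ C λ^λ`, while for `i ≤ N` and `r ≤ r₀` the terms are
dominated by `e^{r₀ N} |a_i| e^{-r₀ i}`, which is bounded because `f ∈ 𝓡^{r₀}`.
-/

open Filter

namespace Stmt0

variable {K : Type*} [NontriviallyNormedField K]

/-- Membership in `𝓡^r`, the ring of analytic functions on `e^{-r} ≤ |t| < 1`:
`|a_i| e^{-s i} → 0` as `i → ±∞` for every `s ∈ (0, r]`. -/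
def RobbaMem (a : ℤ → K) (r : ℝ) : Prop :=
  ∀ s ∈ Set.Ioc (0 : ℝ) r,
    Tendsto (fun i : ℤ => ‖a i‖ * Real.exp (-s * (i : ℝ))) (cocompact ℤ) (nhds 0)

/-- The norm `|f|_r = sup_{i∈ℤ} |a_i| e^{-ri}`. -/
noncomputable def gnorm (a : ℤ → K) (r : ℝ) : ℝ :=
  ⨆ i : ℤ, ‖a i‖ * Real.exp (-r * (i : ℝ))

open Real Set

lemma rpow_le_rpow_self_mul_exp {lam x : ℝ} (hlam : 0 ≤ lam) (hx : 0 ≤ x) :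
    x ^ lam ≤ lam ^ lam * exp x := by
  rcases hlam.eq_or_lt with rfl | hlam
  · simpa using one_le_exp hx
  have hdiv : 0 ≤ x / lam := div_nonneg hx hlam.le
  calc x ^ lam = (lam * (x / lam)) ^ lam := by rw [mul_div_cancel₀ x hlam.ne']
    _ = lam ^ lam * (x / lam) ^ lam := mul_rpow hlam.le hdiv
    _ ≤ lam ^ lam * exp (x / lam) ^ lam := by
        gcongr
        linarith [add_one_le_exp (x / lam)]
    _ = lam ^ lam * exp x := by rw [← exp_mul, div_mul_cancel₀ x hlam.ne']

lemma rpow_mul_mul_exp_neg_le {lam r x b C : ℝ} (hlam : 0 ≤ lam) (hr : 0 ≤ r) (hx : 0 ≤ x)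
    (hC : 0 ≤ C) (hb : b ≤ C * x ^ lam) :
    r ^ lam * (b * exp (-r * x)) ≤ C * lam ^ lam := by
  have hrx := rpow_le_rpow_self_mul_exp hlam (mul_nonneg hr hx)
  calc r ^ lam * (b * exp (-r * x)) ≤ r ^ lam * (C * x ^ lam * exp (-r * x)) := by gcongr
    _ = C * ((r * x) ^ lam * exp (-(r * x))) := by rw [mul_rpow hr hx, neg_mul]; ring
    _ ≤ C * (lam ^ lam * exp (r * x) * exp (-(r * x))) := by gcongr
    _ = C * lam ^ lam := by rw [mul_assoc, ← exp_add, add_neg_cancel, exp_zero, mul_one]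

lemma exp_neg_mul_le_of_le {r r₀ x N : ℝ} (hr : 0 ≤ r) (hrr₀ : r ≤ r₀) (hxN : x ≤ N)
    (hN : 0 ≤ N) : exp (-r * x) ≤ exp (-r₀ * x) * exp (r₀ * N) := by
  rw [← exp_add, exp_le_exp]
  nlinarith [mul_le_mul_of_nonneg_left hxN (sub_nonneg.2 hrr₀)]

namespace RobbaMem

variable {a : ℤ → K} {r₀ s : ℝ}

lemma bddAbove (ha : RobbaMem a r₀) (hs : s ∈ Ioc 0 r₀) :
    BddAbove (range fun i : ℤ => ‖a i‖ * exp (-s * i)) := by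
  have h := ha s hs
  rw [cocompact_eq_cofinite] at h
  exact h.bddAbove_range_of_cofinite

lemma le_gnorm (ha : RobbaMem a r₀) (hs : s ∈ Ioc 0 r₀) (i : ℤ) :
    ‖a i‖ * exp (-s * i) ≤ gnorm a s :=
  le_ciSup (ha.bddAbove hs) i

lemma norm_le_exp_one_mul_gnorm (ha : RobbaMem a r₀) {i : ℤ} (hi : (i : ℝ)⁻¹ ∈ Ioc 0 r₀) :
    ‖a i‖ ≤ exp 1 * gnorm a (i : ℝ)⁻¹ := by
  have hi0 : (i : ℝ) ≠ 0 := (inv_pos.1 hi.1).ne'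
  have h := ha.le_gnorm hi i
  rw [neg_mul, inv_mul_cancel₀ hi0, exp_neg, ← div_eq_mul_inv, div_le_iff₀ (exp_pos 1)] at h
  rwa [mul_comm]

lemma eventually_norm_le_of_rpow_mul_gnorm_le (ha : RobbaMem a r₀) (hr₀ : 0 < r₀)
    {r' C lam : ℝ} (hr' : 0 < r') (hC : ∀ r ∈ Ioc 0 r', r ^ lam * gnorm a r ≤ C) :
    ∀ᶠ i : ℤ in atTop, ‖a i‖ ≤ exp 1 * C * (i : ℝ) ^ lam := by
  have hsmall : ∀ᶠ i : ℤ in atTop, (i : ℝ)⁻¹ ∈ Ioc 0 (min r₀ r') :=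
    (tendsto_inv_atTop_nhdsGT_zero.comp tendsto_intCast_atTop_atTop).eventually
      (Ioc_mem_nhdsGT (lt_min hr₀ hr'))
  filter_upwards [hsmall] with i hi
  have hi0 : 0 < (i : ℝ) := inv_pos.1 hi.1
  have hg : gnorm a (i : ℝ)⁻¹ ≤ C * (i : ℝ) ^ lam := by
    have h := hC _ ⟨hi.1, hi.2.trans (min_le_right _ _)⟩
    rwa [inv_rpow hi0.le, inv_mul_le_iff₀ (rpow_pos_of_pos hi0 lam), mul_comm] at h
  calc ‖a i‖ ≤ exp 1 * gnorm a (i : ℝ)⁻¹ :=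
        ha.norm_le_exp_one_mul_gnorm ⟨hi.1, hi.2.trans (min_le_left _ _)⟩
    _ ≤ exp 1 * C * (i : ℝ) ^ lam := by rw [mul_assoc]; gcongr

lemma exists_rpow_mul_gnorm_le_of_eventually_norm_le (ha : RobbaMem a r₀) (hr₀ : 0 < r₀)
    {lam C : ℝ} (hlam : 0 ≤ lam) (hC : ∀ᶠ i : ℤ in atTop, ‖a i‖ ≤ C * (i : ℝ) ^ lam) :
    ∃ B, ∀ r ∈ Ioc 0 (min r₀ 1), r ^ lam * gnorm a r ≤ B := by
  obtain ⟨N, hN⟩ := eventually_atTop.1 (hC.and (eventually_ge_atTop 0))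
  have hN0 : (0 : ℝ) ≤ N := by exact_mod_cast (hN N le_rfl).2
  obtain ⟨M, hM⟩ := ha.bddAbove ⟨hr₀, le_rfl⟩
  refine ⟨max (M * exp (r₀ * N)) (max C 0 * lam ^ lam), fun r ⟨hr, hr₁⟩ => ?_⟩
  rw [gnorm, mul_iSup_of_nonneg (rpow_nonneg hr.le lam)]
  refine ciSup_le fun i => ?_
  rcases le_total N i with hi | hi
  · obtain ⟨hai, hi0⟩ := hN i hi
    calc r ^ lam * (‖a i‖ * exp (-r * i)) ≤ max C 0 * lam ^ lam :=
          rpow_mul_mul_exp_neg_le hlam hr.le (by exact_mod_cast hi0) (le_max_right _ _)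
            (hai.trans (by gcongr; exact le_max_left _ _))
      _ ≤ _ := le_max_right _ _
  · have hexp := exp_neg_mul_le_of_le hr.le (hr₁.trans (min_le_left _ _))
      (by exact_mod_cast hi : (i : ℝ) ≤ N) hN0
    calc r ^ lam * (‖a i‖ * exp (-r * i)) ≤ 1 * (‖a i‖ * exp (-r₀ * i) * exp (r₀ * N)) := by
          refine mul_le_mul (rpow_le_one hr.le (hr₁.trans (min_le_right _ _)) hlam) ?_
            (by positivity) zero_le_one
          rw [mul_assoc]
          gcongr
      _ ≤ M * exp (r₀ * N) := by
          rw [one_mul]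
          gcongr
          exact hM ⟨i, rfl⟩
      _ ≤ _ := le_max_left _ _

end RobbaMem

theorem taylor_expansion_criterion_general
    (a : ℤ → K) (hf : ∃ r > 0, RobbaMem a r) (lam : ℝ) (hlam : 0 ≤ lam) :
    (∃ r' > 0, ∃ C : ℝ, ∀ r ∈ Set.Ioc (0 : ℝ) r', r ^ lam * gnorm a r ≤ C) ↔
      ∃ C : ℝ, ∀ᶠ i : ℤ in atTop, ‖a i‖ ≤ C * (i : ℝ) ^ lam := by
  obtain ⟨r₀, hr₀, ha⟩ := hf
  constructor
  · rintro ⟨r', hr', C, hC⟩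
    exact ⟨exp 1 * C, ha.eventually_norm_le_of_rpow_mul_gnorm_le hr₀ hr' hC⟩
  · rintro ⟨C, hC⟩
    obtain ⟨B, hB⟩ := ha.exists_rpow_mul_gnorm_le_of_eventually_norm_le hr₀ hlam hC
    exact ⟨min r₀ 1, lt_min hr₀ one_pos, B, hB⟩

/-- Taylor expansion criterion for log-growth `λ`. -/
theorem taylor_expansion_criterion [CompleteSpace K] [IsUltrametricDist K]
    (a : ℤ → K) (hf : ∃ r > 0, RobbaMem a r) (lam : ℝ) (hlam : 0 ≤ lam) :
    (∃ r' > 0, ∃ C : ℝ, ∀ r ∈ Set.Ioc (0 : ℝ) r', r ^ lam * gnorm a r ≤ C) ↔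
      ∃ C : ℝ, ∀ᶠ i : ℤ in atTop, ‖a i‖ ≤ C * (i : ℝ) ^ lam :=
  taylor_expansion_criterion_general a hf lam hlam

end Stmt0
end

section
/- Let F be a complete discrete valuation field with an isometric ring endomorphism φ, and let M, N be φ-modules over F (finite free F-modules with a φ-semilinear automorphism). If the Frobenius slope multisets of M and N are disjoint, then every F-linear φ-equivariant map from M to N is zero. -/
/-!
Take Jordan–Hölder series of `M` and `N` by `φ`-stable subspaces. If `g ≠ 0`, let `M_{i+1}` be
the first step of the series of `M` not killed by `g`, and `N_{j+1}` the first step of the series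
of `N` containing `g(M_{i+1})`. The kernel and the image of the induced map
`M_{i+1}/M_i → N_{j+1}/N_j` are `φ`-stable, so irreducibility of both constituents makes it an
equivariant isomorphism. Conjugate Frobenii have the same spectral radius (the operator norms of
their iterates differ by a bounded factor, which disappears under `n`-th roots), so the two
constituents have the same slope, which then lies in both slope multisets.
-/

namespace Stmt7

open Filter

/-- The sup norm on a vector space with respect to a fixed basis
(used to define the spectral radius; the latter is independent of this choice). -/
noncomputable def supNorm (F : Type*) [NontriviallyNormedField F]
    {M : Type*} [AddCommGroup M] [Module F M] (v : M) : ℝ :=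
  ⨆ i, ‖(Module.Basis.ofVectorSpace F M).repr v i‖

/-- The operator norm `sup_{v ≠ 0} ‖f v‖ / ‖v‖` with respect to the sup norm. -/
noncomputable def opN (F : Type*) [NontriviallyNormedField F]
    {M : Type*} [AddCommGroup M] [Module F M] (f : M → M) : ℝ :=
  ⨆ v : M, supNorm F (f v) / supNorm F v

/-- The spectral radius `|f|_sp = lim_n ‖f^n‖^{1/n}` of an endomorphism. -/
noncomputable def spRad (F : Type*) [NontriviallyNormedField F]
    {M : Type*} [AddCommGroup M] [Module F M] (f : M → M) : ℝ :=
  Filter.limsup (fun n : ℕ => (opN F (f^[n])) ^ ((n : ℝ)⁻¹)) atTop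

/-- A `φ`-module structure over `F`: a `φ`-semilinear endomorphism `f` of a
finite free module whose linearization `φ*M → M` is an isomorphism
(equivalently, for a field `F`, whose range spans `M`). -/
structure IsPhiModule {F : Type*} [NontriviallyNormedField F] (φ : F →+* F)
    {M : Type*} [AddCommGroup M] [Module F M] (f : M → M) : Prop where
  map_add : ∀ x y, f (x + y) = f x + f y
  map_smul : ∀ (c : F) (x : M), f (c • x) = φ c • f x
  span_range : Submodule.span F (Set.range f) = ⊤

/-- The dual Frobenius structure on `M∨`, characterized by
`(g ψ)(f m) = φ (ψ m)` together with `φ`-semilinearity. -/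
def IsDualFrob {F : Type*} [NontriviallyNormedField F] (φ : F →+* F)
    {M : Type*} [AddCommGroup M] [Module F M]
    (f : M → M) (g : Module.Dual F M → Module.Dual F M) : Prop :=
  (∀ x y, g (x + y) = g x + g y) ∧
  (∀ (c : F) (x : Module.Dual F M), g (c • x) = φ c • g x) ∧
  (∀ (ψ : Module.Dual F M) (m : M), g ψ (f m) = φ (ψ m))

/-- `(M, f)` is pure of Frobenius slope `lam`:
`|φ|_{sp,M} = |q|^lam` and `|φ|_{sp,M∨} = |q|^{-lam}`, where `qn = |q|`. -/
def IsPureOfSlope {F : Type*} [NontriviallyNormedField F] (φ : F →+* F) (qn : ℝ)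
    {M : Type*} [AddCommGroup M] [Module F M] (f : M → M) (lam : ℝ) : Prop :=
  spRad F f = qn ^ lam ∧
  ∀ g : Module.Dual F M → Module.Dual F M, IsDualFrob φ f g → spRad F g = qn ^ (-lam)

/-- The subquotient `N₂/N₁` (for `f`-stable `N₁ ≤ N₂`) is pure of slope `lam`:
any induced endomorphism of `N₂ ⧸ N₁` is pure of slope `lam`. -/
def SubquotPure {F : Type*} [NontriviallyNormedField F] (φ : F →+* F) (qn : ℝ)
    {M : Type*} [AddCommGroup M] [Module F M] (f : M → M)
    (N₁ N₂ : Submodule F M) (lam : ℝ) : Prop :=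
  ∀ g : (↥N₂ ⧸ Submodule.comap N₂.subtype N₁) → (↥N₂ ⧸ Submodule.comap N₂.subtype N₁),
    (∀ x y : N₂, f (x : M) = (y : M) →
      g (Submodule.Quotient.mk x) = Submodule.Quotient.mk y) →
    IsPureOfSlope φ qn g lam

/-- `S` is the Frobenius slope multiset of `(M, f)`: the multiset of slopes of
the Jordan–Hölder constituents, counted with multiplicity `dim` of the
constituents. -/
def IsSlopeMultiset {F : Type*} [NontriviallyNormedField F] (φ : F →+* F) (qn : ℝ)
    {M : Type*} [AddCommGroup M] [Module F M] (f : M → M) (S : Multiset ℝ) : Prop :=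
  ∃ (n : ℕ) (N : Fin (n + 1) → Submodule F M) (lam : Fin n → ℝ),
    N 0 = ⊥ ∧ N (Fin.last n) = ⊤ ∧
    (∀ i : Fin n, N i.castSucc ≤ N i.succ) ∧
    (∀ i : Fin (n + 1), ∀ x ∈ N i, f x ∈ N i) ∧
    (∀ i : Fin n, SubquotPure φ qn f (N i.castSucc) (N i.succ) (lam i)) ∧
    (∀ i : Fin n, ∀ P : Submodule F M,
      N i.castSucc ≤ P → P ≤ N i.succ → (∀ x ∈ P, f x ∈ P) →
      P = N i.castSucc ∨ P = N i.succ) ∧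
    S = Finset.univ.sum fun i : Fin n =>
      Multiset.replicate
        (Module.finrank F
          (↥(N i.succ) ⧸ Submodule.comap (N i.succ).subtype (N i.castSucc)))
        (lam i)

/-- `S` is the Frobenius slope filtration of `(M, f)`: an increasing,
exhaustive, separated, right continuous filtration by `φ`-submodules whose
nonzero graded pieces are pure of slope `λ` with `λ ∈ ℚ`. -/
def IsSlopeFiltration {F : Type*} [NontriviallyNormedField F] (φ : F →+* F) (qn : ℝ)
    {M : Type*} [AddCommGroup M] [Module F M] (f : M → M)
    (S : ℝ → Submodule F M) : Prop :=
  Monotone S ∧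
  (∀ lam : ℝ, ∀ x ∈ S lam, f x ∈ S lam) ∧
  (⨆ lam : ℝ, S lam) = ⊤ ∧
  (⨅ lam : ℝ, S lam) = ⊥ ∧
  (∀ lam : ℝ, S lam = ⨅ (μ : ℝ) (_ : lam < μ), S μ) ∧
  (∀ lam : ℝ, (⨆ (μ : ℝ) (_ : μ < lam), S μ) ≠ S lam →
    (∃ rq : ℚ, (rq : ℝ) = lam) ∧
    SubquotPure φ qn f (⨆ (μ : ℝ) (_ : μ < lam), S μ) (S lam) lam)

section SupNorm

variable (F : Type*) [NontriviallyNormedField F] {M : Type*} [AddCommGroup M] [Module F M]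

lemma supNorm_nonneg (v : M) : 0 ≤ supNorm F v :=
  Real.iSup_nonneg fun _ => norm_nonneg _

lemma norm_repr_le_supNorm [FiniteDimensional F M] (v : M)
    (i : Module.Basis.ofVectorSpaceIndex F M) :
    ‖(Module.Basis.ofVectorSpace F M).repr v i‖ ≤ supNorm F v :=
  le_ciSup (f := fun j => ‖(Module.Basis.ofVectorSpace F M).repr v j‖)
    (Set.finite_range _).bddAbove i

variable {F} in
lemma supNorm_le {v : M} {a : ℝ} (ha : 0 ≤ a)
    (h : ∀ i, ‖(Module.Basis.ofVectorSpace F M).repr v i‖ ≤ a) : supNorm F v ≤ a :=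
  Real.iSup_le h ha

lemma supNorm_zero : supNorm F (0 : M) = 0 :=
  le_antisymm (supNorm_le le_rfl (by simp)) (supNorm_nonneg F 0)

lemma supNorm_add_le [FiniteDimensional F M] (x y : M) :
    supNorm F (x + y) ≤ supNorm F x + supNorm F y :=
  supNorm_le (add_nonneg (supNorm_nonneg F x) (supNorm_nonneg F y)) fun i => by
    rw [map_add]
    exact (norm_add_le _ _).trans
      (add_le_add (norm_repr_le_supNorm F x i) (norm_repr_le_supNorm F y i))

lemma supNorm_smul_le [FiniteDimensional F M] (c : F) (x : M) :
    supNorm F (c • x) ≤ ‖c‖ * supNorm F x :=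
  supNorm_le (mul_nonneg (norm_nonneg c) (supNorm_nonneg F x)) fun i => by
    rw [map_smul, Finsupp.smul_apply, smul_eq_mul, norm_mul]
    exact mul_le_mul_of_nonneg_left (norm_repr_le_supNorm F x i) (norm_nonneg c)

lemma supNorm_sum_le [FiniteDimensional F M] {ι : Type*} (s : Finset ι) (u : ι → M) :
    supNorm F (∑ i ∈ s, u i) ≤ ∑ i ∈ s, supNorm F (u i) :=
  Finset.le_sum_of_subadditive _ (supNorm_zero F).le (supNorm_add_le F) s u

end SupNorm

section OpN

variable {F : Type*} [NontriviallyNormedField F] {M : Type*} [AddCommGroup M] [Module F M]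

lemma opN_nonneg (f : M → M) : 0 ≤ opN F f :=
  Real.iSup_nonneg fun _ => div_nonneg (supNorm_nonneg F _) (supNorm_nonneg F _)

lemma div_supNorm_le {f : M → M} {A : ℝ} (hA : 0 ≤ A)
    (h : ∀ v, supNorm F (f v) ≤ A * supNorm F v) (v : M) :
    supNorm F (f v) / supNorm F v ≤ A := by
  rcases (supNorm_nonneg F v).eq_or_lt with h0 | hpos
  · rw [← h0, div_zero]
    exact hA
  · exact (div_le_iff₀ hpos).mpr (h v)

lemma opN_le {f : M → M} {A : ℝ} (hA : 0 ≤ A)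
    (h : ∀ v, supNorm F (f v) ≤ A * supNorm F v) : opN F f ≤ A :=
  Real.iSup_le (div_supNorm_le hA h) hA

lemma supNorm_le_opN_mul {f : M → M} {A : ℝ} (hA : 0 ≤ A)
    (h : ∀ v, supNorm F (f v) ≤ A * supNorm F v) (v : M) :
    supNorm F (f v) ≤ opN F f * supNorm F v := by
  rcases (supNorm_nonneg F v).eq_or_lt with h0 | hpos
  · simpa [← h0] using h v
  · rw [← div_le_iff₀ hpos]
    exact le_ciSup ⟨A, Set.forall_mem_range.mpr (div_supNorm_le hA h)⟩ v

lemma supNorm_iterate_le {f : M → M} {A : ℝ} (hA : 0 ≤ A)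
    (h : ∀ v, supNorm F (f v) ≤ A * supNorm F v) (n : ℕ) (v : M) :
    supNorm F (f^[n] v) ≤ A ^ n * supNorm F v := by
  induction n with
  | zero => simp
  | succ n ih =>
    rw [Function.iterate_succ_apply', pow_succ', mul_assoc]
    exact (h _).trans (mul_le_mul_of_nonneg_left ih hA)

variable [FiniteDimensional F M] {N : Type*} [AddCommGroup N] [Module F N]
  [FiniteDimensional F N]

lemma exists_supNorm_map_le {σ : F →+* F} (hσ : ∀ c, ‖σ c‖ ≤ ‖c‖) (f : M →ₛₗ[σ] N) :
    ∃ A, 0 ≤ A ∧ ∀ v, supNorm F (f v) ≤ A * supNorm F v := by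
  set b := Module.Basis.ofVectorSpace F M
  refine ⟨∑ i, supNorm F (f (b i)), Finset.sum_nonneg fun i _ => supNorm_nonneg F _,
    fun v => ?_⟩
  conv_lhs => rw [← b.sum_repr v, map_sum]
  rw [Finset.sum_mul]
  refine (supNorm_sum_le F _ _).trans (Finset.sum_le_sum fun i _ => ?_)
  calc supNorm F (f (b.repr v i • b i))
      ≤ ‖σ (b.repr v i)‖ * supNorm F (f (b i)) := by
        rw [f.map_smulₛₗ]
        exact supNorm_smul_le F _ _
    _ ≤ supNorm F v * supNorm F (f (b i)) :=
        mul_le_mul_of_nonneg_right ((hσ _).trans (norm_repr_le_supNorm F v i))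
          (supNorm_nonneg F _)
    _ = supNorm F (f (b i)) * supNorm F v := mul_comm _ _

end OpN

section SpRad

open Topology

lemma rpow_inv_natCast_le_max {x D : ℝ} (hx : 0 ≤ x) (hD : 0 ≤ D) {n : ℕ} (h : x ≤ D ^ n) :
    x ^ (n : ℝ)⁻¹ ≤ max D 1 := by
  rcases n.eq_zero_or_pos with rfl | hn
  · simp
  · refine le_max_of_le_left ((Real.rpow_inv_le_iff_of_pos hx hD (by positivity)).mpr ?_)
    rwa [Real.rpow_natCast]

lemma limsup_rpow_inv_le_of_le_mul {a b : ℕ → ℝ} (ha : ∀ n, 0 ≤ a n) (hb : ∀ n, 0 ≤ b n)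
    {C D : ℝ} (hC : 0 < C) (hD : 0 ≤ D) (hab : ∀ n, a n ≤ C * b n) (hbD : ∀ n, b n ≤ D ^ n) :
    limsup (fun n : ℕ => a n ^ (n : ℝ)⁻¹) atTop ≤
      limsup (fun n : ℕ => b n ^ (n : ℝ)⁻¹) atTop := by
  set B := fun n : ℕ => b n ^ (n : ℝ)⁻¹
  set c := fun n : ℕ => C ^ (n : ℝ)⁻¹
  have hc : Tendsto c atTop (𝓝 1) := by
    have := (Real.continuousAt_const_rpow hC.ne').tendsto.comp tendsto_inv_atTop_nhds_zero_nat
    rwa [Real.rpow_zero] at this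
  have hB0 : ∀ n, 0 ≤ B n := fun n => Real.rpow_nonneg (hb n) _
  have hBbdd : IsBoundedUnder (· ≤ ·) atTop B :=
    isBoundedUnder_of_eventually_le (a := max D 1)
      (Eventually.of_forall fun n => rpow_inv_natCast_le_max (hb n) hD (hbD n))
  have hab' : ∀ n, a n ^ (n : ℝ)⁻¹ ≤ (c * B) n := fun n =>
    (Real.rpow_le_rpow (ha n) (hab n) (by positivity)).trans_eq (Real.mul_rpow hC.le (hb n))
  calc limsup (fun n : ℕ => a n ^ (n : ℝ)⁻¹) atTop
      ≤ limsup (c * B) atTop :=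
        limsup_le_limsup (Eventually.of_forall hab')
          (isBoundedUnder_of_eventually_ge (a := 0)
            (Eventually.of_forall fun n => Real.rpow_nonneg (ha n) _)).isCoboundedUnder_le
          (isBoundedUnder_le_mul_of_nonneg
            (Eventually.of_forall fun n => Real.rpow_nonneg hC.le _).frequently
            hc.isBoundedUnder_le (Eventually.of_forall hB0) hBbdd)
    _ ≤ limsup c atTop * limsup B atTop :=
        limsup_mul_le (Eventually.of_forall fun n => Real.rpow_nonneg hC.le _).frequently
          hc.isBoundedUnder_le (Eventually.of_forall hB0) hBbdd
    _ = limsup B atTop := by rw [hc.limsup_eq, one_mul]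

variable {F : Type*} [NontriviallyNormedField F]
  {M N : Type*} [AddCommGroup M] [Module F M] [FiniteDimensional F M]
  [AddCommGroup N] [Module F N] [FiniteDimensional F N]

lemma spRad_le_of_semiconj (u : M ≃ₗ[F] N) {fM : M → M} {fN : N → N} {A : ℝ} (hA : 0 ≤ A)
    (hfM : ∀ v, supNorm F (fM v) ≤ A * supNorm F v) (h : Function.Semiconj u fM fN) :
    spRad F fN ≤ spRad F fM := by
  obtain ⟨Au, hAu0, hAu⟩ := exists_supNorm_map_le (fun _ => le_rfl) u.toLinearMap
  obtain ⟨Av, hAv0, hAv⟩ := exists_supNorm_map_le (fun _ => le_rfl) u.symm.toLinearMap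
  have hiter (n : ℕ) := supNorm_iterate_le hA hfM n
  have hC : 0 < Au * Av + 1 := add_pos_of_nonneg_of_pos (mul_nonneg hAu0 hAv0) one_pos
  refine limsup_rpow_inv_le_of_le_mul (fun _ => opN_nonneg _) (fun _ => opN_nonneg _)
    hC hA (fun n => ?_) (fun n => opN_le (pow_nonneg hA n) (hiter n))
  refine opN_le (mul_nonneg hC.le (opN_nonneg _)) fun w => ?_
  have hconj : fN^[n] w = u (fM^[n] (u.symm w)) := by
    rw [(h.iterate_right n).eq, u.apply_symm_apply]
  calc supNorm F (fN^[n] w)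
      ≤ Au * (opN F fM^[n] * (Av * supNorm F w)) := by
        rw [hconj]
        refine (hAu _).trans (mul_le_mul_of_nonneg_left ?_ hAu0)
        refine (supNorm_le_opN_mul (pow_nonneg hA n) (hiter n) _).trans ?_
        exact mul_le_mul_of_nonneg_left (hAv w) (opN_nonneg _)
    _ ≤ (Au * Av + 1) * opN F fM^[n] * supNorm F w := by
        have := opN_nonneg (F := F) fM^[n]
        have := supNorm_nonneg F w
        nlinarith

lemma spRad_eq_of_semiconj {σ : F →+* F} (hσ : ∀ c, ‖σ c‖ ≤ ‖c‖) (u : M ≃ₗ[F] N)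
    (fM : M →ₛₗ[σ] M) (fN : N →ₛₗ[σ] N) (h : Function.Semiconj u fM fN) :
    spRad F fM = spRad F fN := by
  obtain ⟨AM, hAM0, hAM⟩ := exists_supNorm_map_le hσ fM
  obtain ⟨AN, hAN0, hAN⟩ := exists_supNorm_map_le hσ fN
  have h' : Function.Semiconj u.symm fN fM := fun y => by
    rw [u.symm_apply_eq, h (u.symm y), u.apply_symm_apply]
  exact le_antisymm (spRad_le_of_semiconj u.symm hAN0 hAN h') (spRad_le_of_semiconj u hAM0 hAM h)

end SpRad

lemma Fin.exists_castSucc_and_not_succ {n : ℕ} {p : Fin (n + 1) → Prop} (h0 : p 0)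
    (hlast : ¬ p (Fin.last n)) : ∃ i : Fin n, p i.castSucc ∧ ¬ p i.succ := by
  by_contra! h
  exact hlast (Fin.induction h0 h (Fin.last n))

lemma Multiset.mem_sum_replicate {α ι : Type*} [Fintype ι] {k : ι → ℕ} {x : ι → α} {i : ι}
    (hi : k i ≠ 0) : x i ∈ ∑ j, Multiset.replicate (k j) (x j) :=
  Multiset.mem_sum.mpr ⟨i, Finset.mem_univ i, Multiset.mem_replicate.mpr ⟨hi, rfl⟩⟩

section Subquotient

variable {F : Type*} [NontriviallyNormedField F]
  {M N : Type*} [AddCommGroup M] [Module F M] [AddCommGroup N] [Module F N]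

abbrev Subquotient (N₁ N₂ : Submodule F M) : Type _ :=
  ↥N₂ ⧸ Submodule.comap N₂.subtype N₁

lemma Subquotient.nontrivial_iff {N₁ N₂ : Submodule F M} :
    Nontrivial (Subquotient N₁ N₂) ↔ ¬ N₂ ≤ N₁ := by
  rw [Submodule.Quotient.nontrivial_iff, Ne, Submodule.comap_subtype_eq_top]

variable {σ : F →+* F} (f : M →ₛₗ[σ] N) {N₁ N₂ : Submodule F M} {P₁ P₂ : Submodule F N}

def subquotientMap (h₁ : ∀ x ∈ N₁, f x ∈ P₁) (h₂ : ∀ x ∈ N₂, f x ∈ P₂) :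
    Subquotient N₁ N₂ →ₛₗ[σ] Subquotient P₁ P₂ :=
  Submodule.mapQ _ _ (f.restrict h₂) fun x hx => h₁ x hx

variable (h₁ : ∀ x ∈ N₁, f x ∈ P₁) (h₂ : ∀ x ∈ N₂, f x ∈ P₂)

@[simp]
lemma subquotientMap_mk (x : N₂) :
    subquotientMap f h₁ h₂ (Submodule.Quotient.mk x) = Submodule.Quotient.mk ⟨f x, h₂ x x.2⟩ :=
  rfl

lemma subquotientMap_injective (h : ∀ x ∈ N₂, f x ∈ P₁ → x ∈ N₁) :
    Function.Injective (subquotientMap f h₁ h₂) := by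
  rw [← LinearMap.ker_eq_bot, Submodule.eq_bot_iff]
  intro q hq
  induction q using Submodule.Quotient.induction_on with
  | H x =>
    rw [LinearMap.mem_ker, subquotientMap_mk, Submodule.Quotient.mk_eq_zero] at hq
    exact (Submodule.Quotient.mk_eq_zero _).mpr (h x x.2 hq)

lemma subquotientMap_surjective [RingHomSurjective σ] (h : P₂ ≤ P₁ ⊔ N₂.map f) :
    Function.Surjective (subquotientMap f h₁ h₂) := by
  intro q
  induction q using Submodule.Quotient.induction_on with
  | H y =>
    obtain ⟨a, ha, _, ⟨x, hx, rfl⟩, hsum⟩ := Submodule.mem_sup.mp (h y.2)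
    refine ⟨Submodule.Quotient.mk ⟨x, hx⟩, ?_⟩
    rw [subquotientMap_mk, Submodule.Quotient.eq, Submodule.mem_comap]
    have hdiff : f x - y = -a := by rw [← hsum]; abel
    simpa [hdiff] using neg_mem ha

lemma subquotientMap_semiconj {τ : F →+* F} {fM : M →ₛₗ[τ] M} {fN : N →ₛₗ[τ] N}
    (hM₁ : ∀ x ∈ N₁, fM x ∈ N₁) (hM₂ : ∀ x ∈ N₂, fM x ∈ N₂)
    (hN₁ : ∀ x ∈ P₁, fN x ∈ P₁) (hN₂ : ∀ x ∈ P₂, fN x ∈ P₂) (h : Function.Semiconj f fM fN) :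
    Function.Semiconj (subquotientMap f h₁ h₂) (subquotientMap fM hM₁ hM₂)
      (subquotientMap fN hN₁ hN₂) := by
  intro q
  induction q using Submodule.Quotient.induction_on with
  | H x => exact congrArg Submodule.Quotient.mk (Subtype.ext (h x))

end Subquotient

section CompositionSeries

variable {F : Type*} [NontriviallyNormedField F]
  {M N : Type*} [AddCommGroup M] [Module F M] [AddCommGroup N] [Module F N]

/-- A Jordan–Hölder series of the `φ`-module `(M, f)`. -/
structure IsStableCompositionSeries (f : M → M) {n : ℕ} (N : Fin (n + 1) → Submodule F M) :
    Prop where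
  zero : N 0 = ⊥
  last : N (Fin.last n) = ⊤
  mono : ∀ i : Fin n, N i.castSucc ≤ N i.succ
  stable : ∀ i, ∀ x ∈ N i, f x ∈ N i
  irreducible : ∀ (i : Fin n) (P : Submodule F M), N i.castSucc ≤ P → P ≤ N i.succ →
    (∀ x ∈ P, f x ∈ P) → P = N i.castSucc ∨ P = N i.succ

namespace IsStableCompositionSeries

variable {f : M → M} {n : ℕ} {N : Fin (n + 1) → Submodule F M}

lemma exists_le_and_not_le (hN : IsStableCompositionSeries f N) {K : Submodule F M}
    (hK : K ≠ ⊤) : ∃ i : Fin n, N i.castSucc ≤ K ∧ ¬ N i.succ ≤ K :=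
  Fin.exists_castSucc_and_not_succ (p := (N · ≤ K)) (hN.zero ▸ bot_le)
    (by rwa [hN.last, top_le_iff])

lemma exists_not_le_and_le (hN : IsStableCompositionSeries f N) {P : Submodule F M}
    (hP : P ≠ ⊥) : ∃ i : Fin n, ¬ P ≤ N i.castSucc ∧ P ≤ N i.succ := by
  obtain ⟨i, hi, hi'⟩ := Fin.exists_castSucc_and_not_succ (p := (¬ P ≤ N ·))
    (by rwa [hN.zero, le_bot_iff]) (by rw [hN.last, not_not]; exact le_top)
  exact ⟨i, hi, not_not.mp hi'⟩

end IsStableCompositionSeries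

lemma IsSlopeMultiset.exists_isStableCompositionSeries {φ : F →+* F} {qn : ℝ} {f : M → M}
    {S : Multiset ℝ} (h : IsSlopeMultiset φ qn f S) :
    ∃ (n : ℕ) (N : Fin (n + 1) → Submodule F M) (lam : Fin n → ℝ),
      IsStableCompositionSeries f N ∧
      (∀ i, SubquotPure φ qn f (N i.castSucc) (N i.succ) (lam i)) ∧
      S = ∑ i, Multiset.replicate
        (Module.finrank F (Subquotient (N i.castSucc) (N i.succ))) (lam i) :=
  let ⟨n, N, lam, h0, hlast, hmono, hstable, hpure, hirr, hS⟩ := h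
  ⟨n, N, lam, ⟨h0, hlast, hmono, hstable, hirr⟩, hpure, hS⟩

theorem exists_bijective_subquotientMap {σ : F →+* F} {fM : M →ₛₗ[σ] M} {fN : N →ₛₗ[σ] N}
    {nM nN : ℕ} {NM : Fin (nM + 1) → Submodule F M} {NN : Fin (nN + 1) → Submodule F N}
    (hNM : IsStableCompositionSeries fM NM) (hNN : IsStableCompositionSeries fN NN)
    (g : M →ₗ[F] N) (hg : Function.Semiconj g fM fN) (hg0 : g ≠ 0) :
    ∃ (i : Fin nM) (j : Fin nN) (h₁ : ∀ x ∈ NM i.castSucc, g x ∈ NN j.castSucc)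
      (h₂ : ∀ x ∈ NM i.succ, g x ∈ NN j.succ),
      ¬ NM i.succ ≤ NM i.castSucc ∧ Function.Bijective (subquotientMap g h₁ h₂) := by
  obtain ⟨i, hker, hnker⟩ := hNM.exists_le_and_not_le (K := LinearMap.ker g)
    (by rwa [Ne, LinearMap.ker_eq_top])
  obtain ⟨j, hnle, hle⟩ := hNN.exists_not_le_and_le (P := (NM i.succ).map g)
    fun h => hnker (LinearMap.le_ker_iff_map.mpr h)
  have h₁ : ∀ x ∈ NM i.castSucc, g x ∈ NN j.castSucc := fun x hx => by
    rw [LinearMap.mem_ker.mp (hker hx)]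
    exact zero_mem _
  have h₂ : ∀ x ∈ NM i.succ, g x ∈ NN j.succ := fun x hx => hle (Submodule.mem_map_of_mem hx)
  refine ⟨i, j, h₁, h₂, fun h => hnker (h.trans hker), subquotientMap_injective _ _ _ ?_,
    subquotientMap_surjective _ _ _ ?_⟩
  · have hK_stable : ∀ x ∈ NM i.succ ⊓ (NN j.castSucc).comap g,
        fM x ∈ NM i.succ ⊓ (NN j.castSucc).comap g := fun x hx =>
      Submodule.mem_inf.mpr ⟨hNM.stable _ x hx.1, by
        rw [Submodule.mem_comap, hg x]
        exact hNN.stable _ _ hx.2⟩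
    rcases hNM.irreducible i _ (le_inf (hNM.mono i) h₁) inf_le_left hK_stable with hK | hK
    · exact fun x hx hgx => hK ▸ ⟨hx, hgx⟩
    · exact absurd (Submodule.map_le_iff_le_comap.mpr (hK.ge.trans inf_le_right)) hnle
  · have hR_stable : ∀ y ∈ NN j.castSucc ⊔ (NM i.succ).map g,
        fN y ∈ NN j.castSucc ⊔ (NM i.succ).map g := fun y hy => by
      obtain ⟨a, ha, _, ⟨x, hx, rfl⟩, rfl⟩ := Submodule.mem_sup.mp hy
      rw [map_add, ← hg x]
      exact Submodule.add_mem_sup (hNN.stable _ a ha)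
        (Submodule.mem_map_of_mem (hNM.stable _ x hx))
    rcases hNN.irreducible j _ le_sup_left (sup_le (hNN.mono j) hle) hR_stable with hR | hR
    · exact absurd (le_sup_right.trans hR.le) hnle
    · exact hR.ge

end CompositionSeries

section Slopes

variable {F : Type*} [NontriviallyNormedField F] {φ : F →+* F} {qn : ℝ}
  {M N : Type*} [AddCommGroup M] [Module F M] [AddCommGroup N] [Module F N]

def IsPhiModule.toSemilinearMap {f : M → M} (hf : IsPhiModule φ f) : M →ₛₗ[φ] M where
  toFun := f
  map_add' := hf.map_add
  map_smul' := hf.map_smul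

lemma SubquotPure.isPureOfSlope_subquotientMap {f : M → M} (hf : IsPhiModule φ f)
    {N₁ N₂ : Submodule F M} {lam : ℝ} (h : SubquotPure φ qn f N₁ N₂ lam)
    (h₁ : ∀ x ∈ N₁, f x ∈ N₁) (h₂ : ∀ x ∈ N₂, f x ∈ N₂) :
    IsPureOfSlope φ qn (subquotientMap hf.toSemilinearMap h₁ h₂) lam :=
  h _ fun _ _ hxy => congrArg Submodule.Quotient.mk (Subtype.ext hxy)

lemma IsPureOfSlope.eq_of_spRad_eq (hqn0 : 0 < qn) (hqn1 : qn ≠ 1) {fM : M → M} {fN : N → N}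
    {lam mu : ℝ} (hM : IsPureOfSlope φ qn fM lam) (hN : IsPureOfSlope φ qn fN mu)
    (h : spRad F fM = spRad F fN) : lam = mu :=
  (Real.rpow_right_inj hqn0 hqn1).mp (hM.1.symm.trans (h.trans hN.1))

end Slopes

theorem hom_eq_zero_of_disjoint_slopes_general
    {F : Type*} [NontriviallyNormedField F]
    (φ : F →+* F) (hiso : ∀ x, ‖φ x‖ = ‖x‖)
    (qn : ℝ) (hqn0 : 0 < qn) (hqn1 : qn < 1)
    {M N : Type*} [AddCommGroup M] [Module F M] [FiniteDimensional F M]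
    [AddCommGroup N] [Module F N] [FiniteDimensional F N]
    (fM : M → M) (fN : N → N) (hM : IsPhiModule φ fM) (hN : IsPhiModule φ fN)
    (SM SN : Multiset ℝ)
    (hSM : IsSlopeMultiset φ qn fM SM) (hSN : IsSlopeMultiset φ qn fN SN)
    (hdisj : ∀ lam : ℝ, lam ∈ SM → lam ∉ SN)
    (g : M →ₗ[F] N) (hg : ∀ x, g (fM x) = fN (g x)) :
    g = 0 := by
  by_contra hg0
  obtain ⟨nM, NM, lamM, hNM, hpureM, rfl⟩ := hSM.exists_isStableCompositionSeries
  obtain ⟨nN, NN, lamN, hNN, hpureN, rfl⟩ := hSN.exists_isStableCompositionSeries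
  obtain ⟨i, j, h₁, h₂, hne, hbij⟩ := exists_bijective_subquotientMap
    (fM := hM.toSemilinearMap) (fN := hN.toSemilinearMap) hNM hNN g hg hg0
  let e := LinearEquiv.ofBijective _ hbij
  have : Nontrivial (Subquotient (NM i.castSucc) (NM i.succ)) :=
    Subquotient.nontrivial_iff.mpr hne
  have hslope : lamM i = lamN j :=
    ((hpureM i).isPureOfSlope_subquotientMap hM (hNM.stable _) (hNM.stable _)).eq_of_spRad_eq
      hqn0 hqn1.ne ((hpureN j).isPureOfSlope_subquotientMap hN (hNN.stable _) (hNN.stable _))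
      (spRad_eq_of_semiconj (fun c => (hiso c).le) e _ _
        (subquotientMap_semiconj g h₁ h₂ _ _ _ _ hg))
  refine hdisj (lamM i) (Multiset.mem_sum_replicate Module.finrank_pos.ne') ?_
  rw [hslope]
  exact Multiset.mem_sum_replicate (e.finrank_eq ▸ Module.finrank_pos).ne'

/-- No nonzero `φ`-equivariant maps between `φ`-modules with disjoint
Frobenius slope multisets. -/
theorem hom_eq_zero_of_disjoint_slopes
    {F : Type*} [NontriviallyNormedField F] [CompleteSpace F]
    (hdisc : ∃ c0 : ℝ, 1 < c0 ∧ ∀ x : F, x ≠ 0 → ∃ n : ℤ, ‖x‖ = c0 ^ n)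
    (φ : F →+* F) (hiso : ∀ x, ‖φ x‖ = ‖x‖)
    (qn : ℝ) (hqn0 : 0 < qn) (hqn1 : qn < 1)
    {M N : Type*} [AddCommGroup M] [Module F M] [FiniteDimensional F M]
    [AddCommGroup N] [Module F N] [FiniteDimensional F N]
    (fM : M → M) (fN : N → N) (hM : IsPhiModule φ fM) (hN : IsPhiModule φ fN)
    (SM SN : Multiset ℝ)
    (hSM : IsSlopeMultiset φ qn fM SM) (hSN : IsSlopeMultiset φ qn fN SN)
    (hdisj : ∀ lam : ℝ, lam ∈ SM → lam ∉ SN)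
    (g : M →ₗ[F] N) (hg : ∀ x, g (fM x) = fN (g x)) :
    g = 0 :=
  hom_eq_zero_of_disjoint_slopes_general φ hiso qn hqn0 hqn1 fM fN hM hN SM SN hSM hSN hdisj g hg

end Stmt7
end
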